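/- Let F be a field of characteristic 0 and h ∈ F[x] nonzero. Then the centralizer of x in A_h is exactly F[x]. -/
import Mathlib


open Polynomial FreeAlgebra

/-- The defining relation of `A_h`: `y * x = x * y + h(x)`. -/
inductive ahRel (F : Type) [Field F] (h : F[X]) :
    FreeAlgebra F (Fin 2) → FreeAlgebra F (Fin 2) → Prop
  | rel : ahRel F h (ι F 1 * ι F 0) (ι F 0 * ι F 1 + aeval (ι F 0) h)

/-- The algebra `A_h` generated by `x, y` with `yx - xy = h(x)`. -/
noncomputable abbrev AW (F : Type) [Field F] (h : F[X]) := RingQuot (ahRel F h)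

/-- The generator `x` of `A_h`. -/
noncomputable def aX (F : Type) [Field F] (h : F[X]) : AW F h :=
  RingQuot.mkAlgHom F (ahRel F h) (ι F 0)

/-- The generator `y` of `A_h`. -/
noncomputable def aY (F : Type) [Field F] (h : F[X]) : AW F h :=
  RingQuot.mkAlgHom F (ahRel F h) (ι F 1)

variable (F : Type) [Field F] (h : F[X])

noncomputable def opM : F[X] →ₐ[F] Module.End F F[X] := Algebra.lmul F F[X]

noncomputable def opD : Module.End F F[X] :=
  (opM F h) ∘ₗ (derivative : F[X] →ₗ[F] F[X])

lemma opM_apply (g f : F[X]) : opM F g f = g * f := rfl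

lemma opD_apply (f : F[X]) : opD F h f = h * derivative f := rfl

lemma opD_mul_opM (g : F[X]) :
    opD F h * opM F g = opM F g * opD F h + opM F (h * derivative g) := by
  refine LinearMap.ext fun f => ?_
  simp only [Module.End.mul_apply, LinearMap.add_apply, opD_apply, opM_apply, derivative_mul]
  ring

lemma opD_mul_opMX : opD F h * opM F X = opM F X * opD F h + opM F h := by
  have := opD_mul_opM F h X
  simpa using this

lemma phi_rel : ∀ ⦃a b : FreeAlgebra F (Fin 2)⦄, ahRel F h a b →
    (FreeAlgebra.lift F ![opM F X, opD F h]) a = (FreeAlgebra.lift F ![opM F X, opD F h]) b := by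
  rintro _ _ ⟨⟩
  simp only [map_mul, map_add, FreeAlgebra.lift_ι_apply, Matrix.cons_val_zero, Matrix.cons_val_one,
    Matrix.head_cons]
  rw [← Polynomial.aeval_algHom_apply (FreeAlgebra.lift F ![opM F X, opD F h]) (ι F 0) h]
  simp only [FreeAlgebra.lift_ι_apply, Matrix.cons_val_zero]
  rw [Polynomial.aeval_algHom_apply (opM F) X h, aeval_X_left_apply, opD_mul_opMX]

/-- The representation of `A_h` on `F[X]` with `x ↦ (X * ·)`, `y ↦ h * d/dX`. -/
noncomputable def phi : AW F h →ₐ[F] Module.End F F[X] :=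
  RingQuot.liftAlgHom F ⟨FreeAlgebra.lift F ![opM F X, opD F h], phi_rel F h⟩

lemma phi_aX : phi F h (aX F h) = opM F X := by
  rw [aX, phi, RingQuot.liftAlgHom_mkAlgHom_apply]
  simp

lemma phi_aY : phi F h (aY F h) = opD F h := by
  rw [aY, phi, RingQuot.liftAlgHom_mkAlgHom_apply]
  simp

lemma phi_aeval (f : F[X]) : phi F h (aeval (aX F h) f) = opM F f := by
  rw [show (phi F h) ((aeval (aX F h)) f) = aeval (phi F h (aX F h)) f from
      (Polynomial.aeval_algHom_apply _ _ _).symm,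
    phi_aX, Polynomial.aeval_algHom_apply (opM F) X f, aeval_X_left_apply]

/-- Realization of a normal form `∑ fₙ(X) Yⁿ` as an operator `∑ M_{fₙ} Dⁿ`. -/
noncomputable def Phi (P : Polynomial F[X]) : Module.End F F[X] :=
  eval₂ (opM F).toRingHom (opD F h) P

/-- Realization of a normal form `∑ fₙ(X) Yⁿ` as an element `∑ fₙ(x) yⁿ` of `A_h`. -/
noncomputable def Psi (P : Polynomial F[X]) : AW F h :=
  eval₂ (aeval (aX F h) : F[X] →ₐ[F] AW F h).toRingHom (aY F h) P

lemma Phi_monomial (n : ℕ) (g : F[X]) :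
    Phi F h (monomial n g) = opM F g * (opD F h) ^ n := by
  simp [Phi, eval₂_monomial]

lemma Phi_add (P Q : Polynomial F[X]) : Phi F h (P + Q) = Phi F h P + Phi F h Q :=
  eval₂_add _ _

lemma Psi_monomial (n : ℕ) (g : F[X]) :
    Psi F h (monomial n g) = aeval (aX F h) g * (aY F h) ^ n := by
  simp [Psi, eval₂_monomial]

lemma Psi_add (P Q : Polynomial F[X]) : Psi F h (P + Q) = Psi F h P + Psi F h Q :=
  eval₂_add _ _

lemma phi_Psi (P : Polynomial F[X]) : phi F h (Psi F h P) = Phi F h P := by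
  have h1 := hom_eval₂ P ((aeval (aX F h) : F[X] →ₐ[F] AW F h).toRingHom)
    ((phi F h).toRingHom) (aY F h)
  rw [Psi, Phi]
  refine h1.trans ?_
  have h2 : ((phi F h).toRingHom.comp (aeval (aX F h) : F[X] →ₐ[F] AW F h).toRingHom)
      = (opM F).toRingHom := RingHom.ext fun f => phi_aeval F h f
  have h3 : (phi F h).toRingHom (aY F h) = opD F h := phi_aY F h
  rw [h2, h3]

lemma Phi_C_mul (g : F[X]) (P : Polynomial F[X]) :
    Phi F h (C g * P) = opM F g * Phi F h P := by
  induction P using Polynomial.induction_on' with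
  | add p q hp hq => rw [mul_add, Phi_add, Phi_add, mul_add, hp, hq]
  | monomial n a =>
      rw [show (C g : Polynomial F[X]) * monomial n a = monomial n (g * a) by
        rw [C_mul_monomial], Phi_monomial, Phi_monomial, map_mul, mul_assoc]

/-- The "coefficient-derivative" operation `∑ fₙ Yⁿ ↦ ∑ h·fₙ' Yⁿ`. -/
noncomputable def hD (Q : Polynomial F[X]) : Polynomial F[X] :=
  Q.sum fun n g => monomial n (h * derivative g)

lemma hD_monomial (n : ℕ) (g : F[X]) :
    hD F h (monomial n g) = monomial n (h * derivative g) := by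
  rw [hD, sum_monomial_index]
  simp

lemma hD_add (P Q : Polynomial F[X]) : hD F h (P + Q) = hD F h P + hD F h Q := by
  rw [hD, hD, hD, sum_add_index] <;> simp [mul_add]

lemma hD_coeff (Q : Polynomial F[X]) (k : ℕ) :
    (hD F h Q).coeff k = h * derivative (Q.coeff k) := by
  induction Q using Polynomial.induction_on' with
  | add p q hp hq => simp [hD_add, hp, hq, mul_add]
  | monomial n a =>
      rw [hD_monomial, coeff_monomial, coeff_monomial]
      split <;> simp

lemma opD_mul_Phi (Q : Polynomial F[X]) :
    opD F h * Phi F h Q = Phi F h (X * Q + hD F h Q) := by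
  induction Q using Polynomial.induction_on' with
  | add p q hp hq =>
      rw [Phi_add, mul_add, hp, hq, hD_add, mul_add, ← Phi_add]
      ring_nf
  | monomial n a =>
      rw [Phi_monomial, hD_monomial, X_mul_monomial, Phi_add, Phi_monomial, Phi_monomial,
        ← mul_assoc, opD_mul_opM, add_mul, mul_assoc, ← pow_succ']

lemma Phi_zero : Phi F h 0 = 0 := eval₂_zero _ _

lemma Dcomm (n : ℕ) : ∃ R : Polynomial F[X],
    Phi F h R = (opD F h) ^ n * opM F X - opM F X * (opD F h) ^ n ∧
    (∀ k, n ≤ k → R.coeff k = 0) ∧ R.coeff (n - 1) = n • h := by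
  induction n with
  | zero =>
      refine ⟨0, ?_, ?_, ?_⟩ <;> simp [Phi_zero]
  | succ n ih =>
      obtain ⟨R, hR, hz, hc⟩ := ih
      refine ⟨X * R + hD F h R + monomial n h, ?_, ?_, ?_⟩
      · rw [Phi_add, ← opD_mul_Phi, hR, Phi_monomial]
        have e2 : opD F h * (opM F X * (opD F h) ^ n)
            = opM F X * opD F h * (opD F h) ^ n + opM F h * (opD F h) ^ n := by
          rw [← mul_assoc, opD_mul_opMX, add_mul]
        rw [mul_sub, e2, ← mul_assoc, ← pow_succ', mul_assoc, ← pow_succ']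
        abel
      · intro k hk
        obtain ⟨m, rfl⟩ : ∃ m, k = m + 1 := ⟨k - 1, by omega⟩
        have hm : n ≤ m := by omega
        rw [coeff_add, coeff_add, coeff_X_mul, hz m hm, hD_coeff, hz (m + 1) (by omega),
          coeff_monomial]
        simp [Nat.ne_of_lt (by omega : n < m + 1)]
      · have hXR : (X * R).coeff n = n • h := by
          cases n with
          | zero => simp
          | succ m => rw [coeff_X_mul]; exact hc
        rw [Nat.add_sub_cancel, coeff_add, coeff_add, hXR, hD_coeff, hz n le_rfl,
          coeff_monomial, if_pos rfl]
        simp only [derivative_zero, mul_zero, add_zero, succ_nsmul, nsmul_eq_mul]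

lemma opM_comm (f g : F[X]) : opM F f * opM F g = opM F g * opM F f := by
  rw [← map_mul, ← map_mul, mul_comm]

lemma Cm (n : ℕ) (g : F[X]) : ∃ R : Polynomial F[X],
    Phi F h R = Phi F h (monomial n g) * opM F X - opM F X * Phi F h (monomial n g) ∧
    (∀ k, n ≤ k → R.coeff k = 0) ∧ R.coeff (n - 1) = n • (h * g) := by
  obtain ⟨R0, hR0, hz0, hc0⟩ := Dcomm F h n
  refine ⟨C g * R0, ?_, ?_, ?_⟩
  · rw [Phi_C_mul, hR0, Phi_monomial, mul_sub, mul_assoc]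
    congr 1
    rw [← mul_assoc, ← mul_assoc, opM_comm]
  · intro k hk
    rw [coeff_C_mul, hz0 k hk, mul_zero]
  · rw [coeff_C_mul, hc0, mul_smul_comm, mul_comm g h]

lemma Phi_sum {ι : Type*} (s : Finset ι) (f : ι → Polynomial F[X]) :
    Phi F h (∑ i ∈ s, f i) = ∑ i ∈ s, Phi F h (f i) := eval₂_finset_sum _ _ _ _

lemma CmSum (P : Polynomial F[X]) : ∃ R : Polynomial F[X],
    Phi F h R = Phi F h P * opM F X - opM F X * Phi F h P ∧
    (∀ k, P.natDegree ≤ k → R.coeff k = 0) ∧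
    R.coeff (P.natDegree - 1) = P.natDegree • (h * P.coeff P.natDegree) := by
  set N := P.natDegree with hN
  choose R hR hz hc using fun i : ℕ => Cm F h i (P.coeff i)
  have hP : Phi F h P = ∑ i ∈ Finset.range (N + 1), Phi F h (monomial i (P.coeff i)) := by
    conv_lhs => rw [as_sum_range' P (N + 1) (Nat.lt_succ_self N)]
    rw [Phi_sum]
  refine ⟨∑ i ∈ Finset.range (N + 1), R i, ?_, ?_, ?_⟩
  · rw [Phi_sum, hP, Finset.sum_mul, Finset.mul_sum, ← Finset.sum_sub_distrib]
    exact Finset.sum_congr rfl fun i _ => hR i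
  · intro k hk
    rw [finset_sum_coeff]
    refine Finset.sum_eq_zero fun i hi => hz i k ?_
    have := Finset.mem_range.mp hi
    omega
  · rw [finset_sum_coeff]
    rw [Finset.sum_eq_single N (fun i hi hne => hz i (N - 1) (by
      have := Finset.mem_range.mp hi; omega)) (fun hni => absurd (Finset.self_mem_range_succ N) hni)]
    exact hc N

lemma Phi_C (g : F[X]) : Phi F h (C g) = opM F g := eval₂_C _ _

lemma opM_inj : Function.Injective (opM F) := by
  intro f g hfg
  have := congrArg (fun T : Module.End F F[X] => T 1) hfg
  simpa [opM_apply] using this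

lemma PhiInjAux [CharZero F] (hh : h ≠ 0) :
    ∀ N : ℕ, ∀ P : Polynomial F[X], P.natDegree ≤ N → Phi F h P = 0 → P = 0 := by
  have base : ∀ P : Polynomial F[X], P.natDegree = 0 → Phi F h P = 0 → P = 0 := by
    intro P hd hP
    have hPC : P = C (P.coeff 0) := eq_C_of_natDegree_le_zero (le_of_eq hd)
    rw [hPC, Phi_C] at hP
    rw [hPC, show P.coeff 0 = 0 from opM_inj F (by simpa using hP), map_zero]
  intro N
  induction N with
  | zero => exact fun P hd hP => base P (Nat.le_zero.mp hd) hP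
  | succ N ih =>
      intro P hd hP
      obtain ⟨R, hR, hz, hc⟩ := CmSum F h P
      rw [hP, zero_mul, mul_zero, sub_zero] at hR
      have hRd : R.natDegree ≤ N := by
        rw [natDegree_le_iff_coeff_eq_zero]
        intro m hm
        exact hz m (by omega)
      have hR0 : R = 0 := ih R hRd hR
      rcases Nat.eq_zero_or_pos P.natDegree with h0 | hpos
      · exact base P h0 hP
      · have : (P.natDegree : F[X]) * (h * P.coeff P.natDegree) = 0 := by
          rw [← nsmul_eq_mul, ← hc, hR0, coeff_zero]
        rcases mul_eq_zero.mp this with hcast | hmul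
        · exact absurd (Nat.cast_eq_zero.mp hcast) (by omega)
        · rcases mul_eq_zero.mp hmul with h1 | h2
          · exact absurd h1 hh
          · exact leadingCoeff_eq_zero.mp h2

lemma Phi_inj [CharZero F] (hh : h ≠ 0) {P : Polynomial F[X]} (hP : Phi F h P = 0) : P = 0 :=
  PhiInjAux F h hh P.natDegree P le_rfl hP

lemma aYX : aY F h * aX F h = aX F h * aY F h + aeval (aX F h) h := by
  have := RingQuot.mkAlgHom_rel F (ahRel.rel (F := F) (h := h))
  rw [map_mul, map_add, map_mul] at this
  rw [aY, aX, this]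
  congr 1
  exact (Polynomial.aeval_algHom_apply (RingQuot.mkAlgHom F (ahRel F h)) (ι F 0) h).symm

lemma aeval_comm (f g : F[X]) :
    aeval (aX F h) f * aeval (aX F h) g = aeval (aX F h) g * aeval (aX F h) f := by
  rw [← map_mul, ← map_mul, mul_comm]

lemma aY_comm (g : F[X]) :
    aY F h * aeval (aX F h) g
      = aeval (aX F h) g * aY F h + aeval (aX F h) (h * derivative g) := by
  induction g using Polynomial.induction_on with
  | C a =>
      simp only [aeval_C, derivative_C, mul_zero, map_zero, add_zero]
      exact (Algebra.commutes a (aY F h)).symm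
  | add p q hp hq =>
      rw [map_add, mul_add, add_mul, hp, hq, derivative_add, mul_add, map_add]
      ring_nf
      abel
  | monomial n a ih =>
      have hu : (C a : F[X]) * X ^ (n + 1) = (C a * X ^ n) * X := by ring
      have l1 : aeval (aX F h) ((C a * X ^ n) * X) = aeval (aX F h) (C a * X ^ n) * aX F h := by
        rw [map_mul, aeval_X]
      have l2 : aY F h * (aeval (aX F h) (C a * X ^ n) * aX F h)
          = aeval (aX F h) (C a * X ^ n) * aX F h * aY F h
            + aeval (aX F h) (C a * X ^ n) * aeval (aX F h) h
            + aeval (aX F h) (h * derivative (C a * X ^ n)) * aX F h := by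
        rw [← mul_assoc, ih, add_mul, mul_assoc, aYX, mul_add, ← mul_assoc]
      have l3 : aeval (aX F h) (h * derivative ((C a * X ^ n) * X))
          = aeval (aX F h) (h * derivative (C a * X ^ n)) * aX F h
            + aeval (aX F h) (C a * X ^ n) * aeval (aX F h) h := by
        rw [derivative_mul, derivative_X, mul_one, mul_add, map_add]
        congr 1
        · rw [← mul_assoc, map_mul, aeval_X]
        · rw [mul_comm h (C a * X ^ n), map_mul]
      rw [hu, l1, l2, l3]
      abel

lemma Psi_C (g : F[X]) : Psi F h (C g) = aeval (aX F h) g := eval₂_C _ _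

lemma Psi_X : Psi F h X = aY F h := eval₂_X _ _

lemma aeval_mul_Psi (g : F[X]) (P : Polynomial F[X]) :
    aeval (aX F h) g * Psi F h P = Psi F h (C g * P) := by
  induction P using Polynomial.induction_on' with
  | add p q hp hq => rw [Psi_add, mul_add, hp, hq, mul_add, Psi_add]
  | monomial n a => rw [Psi_monomial, C_mul_monomial, Psi_monomial, ← mul_assoc, ← map_mul]

lemma Psi_mul_aY (P : Polynomial F[X]) : Psi F h P * aY F h = Psi F h (P * X) := by
  induction P using Polynomial.induction_on' with
  | add p q hp hq => rw [Psi_add, add_mul, hp, hq, add_mul, Psi_add]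
  | monomial n a =>
      rw [Psi_monomial, mul_comm _ (X : Polynomial F[X]), X_mul_monomial, Psi_monomial,
        mul_assoc, ← pow_succ]

lemma aY_mul_Psi (P : Polynomial F[X]) :
    aY F h * Psi F h P = Psi F h (X * P + hD F h P) := by
  induction P using Polynomial.induction_on' with
  | add p q hp hq =>
      rw [Psi_add, mul_add, hp, hq, hD_add, ← Psi_add]
      congr 1
      ring
  | monomial n a =>
      rw [Psi_monomial, ← mul_assoc, aY_comm, X_mul_monomial, hD_monomial, Psi_add,
        Psi_monomial, Psi_monomial, add_mul, mul_assoc, ← pow_succ']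

lemma aYpow_mul_aX (n : ℕ) : ∃ Q, (aY F h) ^ n * aX F h = Psi F h Q := by
  induction n with
  | zero => exact ⟨C X, by rw [pow_zero, one_mul, Psi_C, aeval_X]⟩
  | succ n ih =>
      obtain ⟨Q, hQ⟩ := ih
      exact ⟨X * Q + hD F h Q, by rw [pow_succ', mul_assoc, hQ, aY_mul_Psi]⟩

lemma Psi_mul_aX (P : Polynomial F[X]) : ∃ Q, Psi F h P * aX F h = Psi F h Q := by
  induction P using Polynomial.induction_on' with
  | add p q hp hq =>
      obtain ⟨Qp, hQp⟩ := hp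
      obtain ⟨Qq, hQq⟩ := hq
      exact ⟨Qp + Qq, by rw [Psi_add, add_mul, hQp, hQq, Psi_add]⟩
  | monomial n a =>
      obtain ⟨Q, hQ⟩ := aYpow_mul_aX F h n
      exact ⟨C a * Q, by rw [Psi_monomial, mul_assoc, hQ, aeval_mul_Psi]⟩

lemma Psi_mul_aeval (P : Polynomial F[X]) (g : F[X]) :
    ∃ Q, Psi F h P * aeval (aX F h) g = Psi F h Q := by
  induction g using Polynomial.induction_on with
  | C a =>
      refine ⟨C (C a) * P, ?_⟩
      rw [aeval_C, ← Algebra.commutes a (Psi F h P), ← aeval_C (aX F h) a, aeval_mul_Psi]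
  | add p q hp hq =>
      obtain ⟨Qp, hQp⟩ := hp
      obtain ⟨Qq, hQq⟩ := hq
      exact ⟨Qp + Qq, by rw [map_add, mul_add, hQp, hQq, Psi_add]⟩
  | monomial n a ih =>
      obtain ⟨Q, hQ⟩ := ih
      obtain ⟨Q', hQ'⟩ := Psi_mul_aX F h Q
      refine ⟨Q', ?_⟩
      rw [show (C a : F[X]) * X ^ (n + 1) = (C a * X ^ n) * X by ring, map_mul, aeval_X,
        ← mul_assoc, hQ, hQ']

lemma Psi_mul_Psi (P Q : Polynomial F[X]) : ∃ S, Psi F h P * Psi F h Q = Psi F h S := by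
  induction Q using Polynomial.induction_on' with
  | add p q hp hq =>
      obtain ⟨Sp, hSp⟩ := hp
      obtain ⟨Sq, hSq⟩ := hq
      exact ⟨Sp + Sq, by rw [Psi_add, mul_add, hSp, hSq, Psi_add]⟩
  | monomial n a =>
      obtain ⟨S, hS⟩ := Psi_mul_aeval F h P a
      refine ⟨S * X ^ n, ?_⟩
      rw [Psi_monomial, ← mul_assoc, hS]
      clear hS
      induction n with
      | zero => simp
      | succ m ihm => rw [pow_succ, ← mul_assoc, ihm, Psi_mul_aY, mul_assoc, ← pow_succ]

lemma Psi_surj (a : AW F h) : ∃ P, a = Psi F h P := by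
  obtain ⟨w, rfl⟩ := RingQuot.mkAlgHom_surjective F (ahRel F h) a
  induction w using FreeAlgebra.induction with
  | grade0 r => exact ⟨C (C r), by
      rw [Psi_C, aeval_C, (RingQuot.mkAlgHom F (ahRel F h)).commutes r]⟩
  | grade1 i =>
      fin_cases i
      · exact ⟨C X, by rw [Psi_C, aeval_X]; rfl⟩
      · exact ⟨X, by rw [Psi_X]; rfl⟩
  | mul x y hx hy =>
      obtain ⟨P, hP⟩ := hx
      obtain ⟨Q, hQ⟩ := hy
      obtain ⟨S, hS⟩ := Psi_mul_Psi F h P Q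
      exact ⟨S, by rw [map_mul, hP, hQ, hS]⟩
  | add x y hx hy =>
      obtain ⟨P, hP⟩ := hx
      obtain ⟨Q, hQ⟩ := hy
      exact ⟨P + Q, by rw [map_add, hP, hQ, Psi_add]⟩

/-- In characteristic 0 (`h ≠ 0`), the centralizer of `x` in `A_h` is exactly `F[x]`. -/
theorem stmt11 (F : Type) [Field F] [CharZero F] (h : F[X]) (hh : h ≠ 0) :
    {a : AW F h | a * aX F h = aX F h * a} =
      Set.range (fun f : F[X] => aeval (aX F h) f) := by
  ext a
  constructor
  · intro ha
    obtain ⟨P, rfl⟩ := Psi_surj F h a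
    have hop : Phi F h P * opM F X - opM F X * Phi F h P = 0 := by
      have := congrArg (phi F h) ha
      rw [map_mul, map_mul, phi_Psi, phi_aX] at this
      rw [this, sub_self]
    obtain ⟨R, hR, hz, hc⟩ := CmSum F h P
    rw [hop] at hR
    have hR0 : R = 0 := Phi_inj F h hh hR
    have hdeg : P.natDegree = 0 := by
      by_contra hne
      have : (P.natDegree : F[X]) * (h * P.coeff P.natDegree) = 0 := by
        rw [← nsmul_eq_mul, ← hc, hR0, coeff_zero]
      rcases mul_eq_zero.mp this with hcast | hmul
      · exact hne (Nat.cast_eq_zero.mp hcast)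
      · rcases mul_eq_zero.mp hmul with h1 | h2
        · exact hh h1
        · exact hne (by rw [leadingCoeff_eq_zero.mp h2, natDegree_zero])
    refine ⟨P.coeff 0, ?_⟩
    rw [show P = C (P.coeff 0) from eq_C_of_natDegree_le_zero (le_of_eq hdeg), Psi_C]
    simp
  · rintro ⟨f, rfl⟩
    show aeval (aX F h) f * aX F h = aX F h * aeval (aX F h) f
    have := aeval_comm F h f X
    rwa [aeval_X] at this
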